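/- arXiv:2003.02696 — 2 statements merged into one kernel-verified Lean document; each statement's English description precedes it below -/
import Mathlib

section
/- For every ε > 0, γ > 0, and every list of targets ϑ̄ = (ϑ̄₁,…,ϑ̄ₙ) ∈ L²(I)ⁿ, the cost functional C_{ε,γ} has a minimizer in the admissible set 𝓐. Furthermore, any minimizer (h,α,ϑ) ∈ 𝓐 satisfies (max_{i=1,…,n}|h_i|)² ≤ Θ̄²/γ, where Θ̄² = Σ_{i=1}^n ∫₀¹ ϑ̄_i². -/
open MeasureTheory Set

noncomputable def edot (p q : ℝ × ℝ) : ℝ := p.1 * q.1 + p.2 * q.2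
noncomputable def enorm2 (p : ℝ × ℝ) : ℝ := Real.sqrt (p.1 ^ 2 + p.2 ^ 2)
noncomputable def Dmvec (v : ℝ) : ℝ × ℝ := (-Real.sin v, Real.cos v)

/-- Lebesgue measure on `I = (0,1)`. -/
noncomputable def mu01 : Measure ℝ := volume.restrict (Ioo 0 1)

/-- The Hilbert space `H^1_{0L}(I)` with norm `‖v‖² = ∫₀¹ (v')²`, modelled isometrically
by the space `L²(I)` of derivatives: an element is its derivative `g ∈ L²(I)`, the
corresponding function being `U g : t ↦ ∫₀ᵗ g`. -/
noncomputable abbrev E := Lp ℝ 2 mu01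

/-- The function of `H^1_{0L}(I)` with derivative `g`. -/
noncomputable def U (g : E) : ℝ → ℝ := fun t => ∫ s in Ioc 0 t, (g : ℝ → ℝ) s ∂mu01

/-- The admissible space `𝓗 = ℝ^{2n} × H^1_{0L}(I) × H^1_{0L}(I)ⁿ`. -/
noncomputable abbrev Hn (n : ℕ) := (Fin n → ℝ × ℝ) × E × (Fin n → E)

/-- Weak solution of the state equation `-ϑ'' − h·Dm(α+ϑ) = 0`, `ϑ(0)=0`, `ϑ'(1)=0`,
for the field `p`, design `a` and state `g` (all in derivative representation). -/
def IsStateSol (p : ℝ × ℝ) (a g : E) : Prop :=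
  ∀ w : E, (∫ s, (g : ℝ → ℝ) s * (w : ℝ → ℝ) s ∂mu01)
    - (∫ s, edot p (Dmvec (U a s + U g s)) * U w s ∂mu01) = 0

/-- The admissible set `𝓐`. -/
def Admissible {n : ℕ} (x : Hn n) : Prop := ∀ i, IsStateSol (x.1 i) x.2.1 (x.2.2 i)

/-- The cost functional `C_{ε,γ}`. -/
noncomputable def cost {n : ℕ} (tb : Fin n → ℝ → ℝ) (ε γ : ℝ) (x : Hn n) : ℝ :=
  (1 / 2) * ∑ i, (∫ s, (U (x.2.2 i) s - tb i s) ^ 2 ∂mu01)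
    + (ε / 2) * (∫ s, ((x.2.1 : ℝ → ℝ) s) ^ 2 ∂mu01)
    + (γ / 2) * ∑ i, (enorm2 (x.1 i)) ^ 2

/-
Direct method. On the admissible set a bound on the cost bounds the field through the
`γ`-term, the design through the `ε`-term, and the states through the a priori estimate
`‖ϑᵢ‖ ≤ |hᵢ|`, obtained by testing the state equation with `ϑᵢ`. A minimizing sequence
therefore has a subsequence whose fields converge and whose designs and states converge
weakly in `H¹`. Weak convergence in `H¹` gives pointwise convergence of the functions, so
dominated convergence passes to the limit in the state equation and in the tracking term,
while the `ε`-term is weakly lower semicontinuous. Comparing a minimizer with the admissible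
point `0` gives `(γ/2)|hᵢ|² ≤ C(0) = Θ̄²/2`.
-/

open Filter Topology
open scoped RealInnerProductSpace

section WeakConvergence

variable {H : Type*} [NormedAddCommGroup H] [InnerProductSpace ℝ H]

def WeakTendsto (u : ℕ → H) (v : H) : Prop :=
  ∀ w, Tendsto (fun k => ⟪u k, w⟫) atTop (𝓝 ⟪v, w⟫)

theorem WeakTendsto.comp {u : ℕ → H} {v : H} (h : WeakTendsto u v) {φ : ℕ → ℕ}
    (hφ : Tendsto φ atTop atTop) : WeakTendsto (u ∘ φ) v :=
  fun w => (h w).comp hφ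

-- Pass `2⟪u k, v⟫ ≤ ‖u k‖² + ‖v‖²` to the limit.
theorem WeakTendsto.mul_norm_sq_le {u : ℕ → H} {v : H} (h : WeakTendsto u v) {t c : ℝ}
    (ht : 0 ≤ t) (hc : Tendsto (fun k => t * ‖u k‖ ^ 2) atTop (𝓝 c)) : t * ‖v‖ ^ 2 ≤ c := by
  have hlim : Tendsto (fun k => 2 * t * ⟪u k, v⟫) atTop (𝓝 (2 * t * ‖v‖ ^ 2)) := by
    simpa only [real_inner_self_eq_norm_sq] using (h v).const_mul (2 * t)
  have hle : ∀ k, 2 * t * ⟪u k, v⟫ ≤ t * ‖u k‖ ^ 2 + t * ‖v‖ ^ 2 := fun k => by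
    have := two_mul_le_add_sq ‖u k‖ ‖v‖
    have := real_inner_le_norm (u k) v
    nlinarith
  have := le_of_tendsto_of_tendsto' hlim (hc.add_const (t * ‖v‖ ^ 2)) hle
  linarith

variable [CompleteSpace H] [TopologicalSpace.SeparableSpace H]

-- Sequential Banach–Alaoglu, transported through the Riesz isomorphism.
theorem exists_subseq_weakTendsto {u : ℕ → H} {R : ℝ} (hu : ∀ k, ‖u k‖ ≤ R) :
    ∃ v φ, StrictMono φ ∧ WeakTendsto (u ∘ φ) v := by
  obtain ⟨ψ, -, φ, hφ, hψ⟩ := WeakDual.isSeqCompact_closedBall ℝ H 0 R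
    (x := fun k => StrongDual.toWeakDual (InnerProductSpace.toDual ℝ H (u k)))
    (fun k => by simpa using hu k)
  refine ⟨(InnerProductSpace.toDual ℝ H).symm (WeakDual.toStrongDual ψ), φ, hφ, fun w => ?_⟩
  simpa [Function.comp_def] using ((WeakDual.eval_continuous w).tendsto ψ).comp hψ

theorem exists_subseq_weakTendsto_pi {R : ℝ} :
    ∀ {n : ℕ} (u : ℕ → Fin n → H), (∀ k i, ‖u k i‖ ≤ R) →
      ∃ (v : Fin n → H) (φ : ℕ → ℕ), StrictMono φ ∧ ∀ i, WeakTendsto (fun k => u (φ k) i) (v i)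
  | 0, _, _ => ⟨0, id, strictMono_id, fun i => i.elim0⟩
  | _ + 1, u, hu => by
    obtain ⟨v, φ, hφ, hv⟩ :=
      exists_subseq_weakTendsto_pi (fun k i => u k i.succ) (fun k i => hu k _)
    obtain ⟨v₀, ψ, hψ, hv₀⟩ := exists_subseq_weakTendsto (u := fun k => u (φ k) 0) (fun k => hu _ _)
    refine ⟨Fin.cons v₀ v, φ ∘ ψ, hφ.comp hψ, Fin.cases hv₀ fun i => ?_⟩
    exact (hv i).comp hψ.tendsto_atTop

end WeakConvergence

instance : IsProbabilityMeasure mu01 := ⟨by simp [mu01]⟩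

instance : NullSingletonClass mu01 := by unfold mu01; infer_instance

instance : IsSeparable mu01 := by unfold mu01; infer_instance

instance : SecondCountableTopology E :=
  haveI : Fact ((2 : ENNReal) ≠ ⊤) := ⟨ENNReal.ofNat_ne_top⟩
  Lp.SecondCountableTopology

theorem integral_mul_eq_inner (f g : E) :
    ∫ s, (f : ℝ → ℝ) s * (g : ℝ → ℝ) s ∂mu01 = ⟪f, g⟫ := by
  simp [L2.inner_def, mul_comm]

theorem integral_sq_eq_norm_sq (f : E) : ∫ s, (f : ℝ → ℝ) s ^ 2 ∂mu01 = ‖f‖ ^ 2 := by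
  simp only [sq, integral_mul_eq_inner, real_inner_self_eq_norm_mul_norm]

noncomputable def indicatorIoc (t : ℝ) : E :=
  indicatorConstLp 2 measurableSet_Ioc (measure_ne_top mu01 (Ioc 0 t)) (1 : ℝ)

theorem U_eq_inner (g : E) (t : ℝ) : U g t = ⟪indicatorIoc t, g⟫ :=
  (L2.inner_indicatorConstLp_one _ _ g).symm

theorem norm_indicatorIoc_le (t : ℝ) : ‖indicatorIoc t‖ ≤ 1 :=
  norm_indicatorConstLp_le.trans <| by
    simpa using Real.rpow_le_one measureReal_nonneg measureReal_le_one (by norm_num)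

theorem abs_U_le (g : E) (t : ℝ) : |U g t| ≤ ‖g‖ := by
  rw [U_eq_inner]
  exact (abs_real_inner_le_norm _ _).trans
    (mul_le_of_le_one_left (norm_nonneg g) (norm_indicatorIoc_le t))

theorem aestronglyMeasurable_U (g : E) : AEStronglyMeasurable (U g) mu01 :=
  ((intervalIntegral.continuousOn_primitive ((Lp.memLp g).integrable one_le_two).integrableOn).mono
    Ioo_subset_Icc_self).aestronglyMeasurable measurableSet_Ioo

theorem WeakTendsto.tendsto_U {g : ℕ → E} {g₀ : E} (h : WeakTendsto g g₀) (t : ℝ) :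
    Tendsto (fun k => U (g k) t) atTop (𝓝 (U g₀ t)) := by
  simpa only [U_eq_inner, real_inner_comm] using h (indicatorIoc t)

theorem U_zero (t : ℝ) : U 0 t = 0 := by
  simp [U_eq_inner]

theorem enorm2_nonneg (p : ℝ × ℝ) : 0 ≤ enorm2 p := Real.sqrt_nonneg _

theorem continuous_enorm2 : Continuous enorm2 := by
  unfold enorm2
  fun_prop

theorem norm_le_enorm2 (p : ℝ × ℝ) : ‖p‖ ≤ enorm2 p := by
  refine max_le ?_ ?_ <;> refine Real.abs_le_sqrt ?_ <;> nlinarith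

theorem continuous_edot_Dmvec : Continuous fun q : (ℝ × ℝ) × ℝ => edot q.1 (Dmvec q.2) := by
  unfold edot Dmvec
  fun_prop

-- Cauchy–Schwarz with `|Dm v| = 1`.
theorem abs_edot_Dmvec_le (p : ℝ × ℝ) (v : ℝ) : |edot p (Dmvec v)| ≤ enorm2 p := by
  refine Real.abs_le_sqrt ?_
  have := Real.sin_sq_add_cos_sq v
  simp only [edot, Dmvec]
  nlinarith [sq_nonneg (p.1 * Real.cos v + p.2 * Real.sin v)]

theorem abs_integral_edot_Dmvec_mul_U_le (p : ℝ × ℝ) (v : ℝ → ℝ) (w : E) :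
    |∫ s, edot p (Dmvec (v s)) * U w s ∂mu01| ≤ enorm2 p * ‖w‖ := by
  have hbound : ∀ s, ‖edot p (Dmvec (v s)) * U w s‖ ≤ enorm2 p * ‖w‖ := fun s => by
    rw [Real.norm_eq_abs, abs_mul]
    exact mul_le_mul (abs_edot_Dmvec_le p _) (abs_U_le w s) (abs_nonneg _) (enorm2_nonneg p)
  simpa using norm_integral_le_of_norm_le_const (μ := mu01) (Eventually.of_forall hbound)

theorem isStateSol_iff {p : ℝ × ℝ} {a g : E} :
    IsStateSol p a g ↔ ∀ w, ⟪g, w⟫ = ∫ s, edot p (Dmvec (U a s + U g s)) * U w s ∂mu01 := by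
  simp only [IsStateSol, integral_mul_eq_inner, sub_eq_zero]

-- The a priori estimate: test the state equation with `ϑ` itself.
theorem IsStateSol.norm_le {p : ℝ × ℝ} {a g : E} (h : IsStateSol p a g) : ‖g‖ ≤ enorm2 p := by
  have hsq : ‖g‖ ^ 2 ≤ enorm2 p * ‖g‖ := by
    rw [← real_inner_self_eq_norm_sq, isStateSol_iff.1 h g]
    exact (le_abs_self _).trans (abs_integral_edot_Dmvec_mul_U_le p _ g)
  rcases (norm_nonneg g).eq_or_lt with h0 | h0
  · exact h0 ▸ enorm2_nonneg p
  · nlinarith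

theorem isStateSol_zero (a : E) : IsStateSol 0 a 0 := fun w => by
  simp [edot]

-- Design and state enter the nonlinearity only through `U`, which converges pointwise.
theorem isStateSol_of_tendsto {p : ℕ → ℝ × ℝ} {p₀ : ℝ × ℝ} {a g : ℕ → E} {a₀ g₀ : E}
    (hp : Tendsto p atTop (𝓝 p₀)) (ha : WeakTendsto a a₀) (hg : WeakTendsto g g₀)
    (hsol : ∀ k, IsStateSol (p k) (a k) (g k)) : IsStateSol p₀ a₀ g₀ := by
  refine isStateSol_iff.2 fun w => tendsto_nhds_unique (hg w) ?_
  simp only [isStateSol_iff.1 (hsol _) w]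
  have hbound : ∀ᶠ k in atTop, enorm2 (p k) ≤ enorm2 p₀ + 1 :=
    ((continuous_enorm2.tendsto p₀).comp hp).eventually (ge_mem_nhds (lt_add_one _))
  refine tendsto_integral_filter_of_dominated_convergence (fun _ => (enorm2 p₀ + 1) * ‖w‖)
    (Eventually.of_forall fun k => ?_) (hbound.mono fun k hk => ?_) (integrable_const _) ?_
  · exact (continuous_edot_Dmvec.comp_aestronglyMeasurable (aestronglyMeasurable_const.prodMk
      ((aestronglyMeasurable_U _).add (aestronglyMeasurable_U _)))).mul (aestronglyMeasurable_U w)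
  · refine Eventually.of_forall fun s => ?_
    rw [Real.norm_eq_abs, abs_mul]
    exact mul_le_mul ((abs_edot_Dmvec_le _ _).trans hk) (abs_U_le w s) (abs_nonneg _)
      (by linarith [enorm2_nonneg p₀])
  · refine Eventually.of_forall fun s => Tendsto.mul_const _ ?_
    exact (continuous_edot_Dmvec.tendsto _).comp
      (hp.prodMk_nhds ((ha.tendsto_U s).add (hg.tendsto_U s)))

theorem tendsto_integral_U_sub_sq {g : ℕ → E} {g₀ : E} (hg : WeakTendsto g g₀) {C : ℝ}
    (hC : ∀ k, ‖g k‖ ≤ C) {f : ℝ → ℝ} (hf : MemLp f 2 mu01) :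
    Tendsto (fun k => ∫ s, (U (g k) s - f s) ^ 2 ∂mu01) atTop
      (𝓝 (∫ s, (U g₀ s - f s) ^ 2 ∂mu01)) := by
  have hdom : Integrable (fun s => (C + |f s|) ^ 2) mu01 := by
    simp only [add_sq, sq_abs]
    exact ((integrable_const _).add ((hf.integrable one_le_two).abs.const_mul _)).add
      hf.integrable_sq
  refine tendsto_integral_of_dominated_convergence _
    (fun k => ((aestronglyMeasurable_U _).sub hf.1).pow 2) hdom (fun k => ?_) ?_
  · refine Eventually.of_forall fun s => ?_
    rw [Real.norm_eq_abs, abs_pow, abs_sub_comm]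
    gcongr
    exact (abs_sub _ _).trans (by linarith [abs_U_le (g k) s, hC k])
  · exact Eventually.of_forall fun s => ((hg.tendsto_U s).sub_const _).pow 2

section Cost

variable {n : ℕ} {tb : Fin n → ℝ → ℝ} {ε γ : ℝ}

theorem cost_eq (x : Hn n) :
    cost tb ε γ x = (1 / 2) * ∑ i, ∫ s, (U (x.2.2 i) s - tb i s) ^ 2 ∂mu01
      + (ε / 2) * ‖x.2.1‖ ^ 2 + (γ / 2) * ∑ i, enorm2 (x.1 i) ^ 2 := by
  rw [cost, integral_sq_eq_norm_sq]

theorem mul_sq_enorm2_le_cost (hε : 0 ≤ ε) (hγ : 0 ≤ γ) (x : Hn n) (i : Fin n) :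
    (γ / 2) * enorm2 (x.1 i) ^ 2 ≤ cost tb ε γ x := by
  have htrack : 0 ≤ ∑ i, ∫ s, (U (x.2.2 i) s - tb i s) ^ 2 ∂mu01 :=
    Finset.sum_nonneg fun i _ => integral_nonneg fun s => sq_nonneg _
  have hsum := Finset.single_le_sum (fun j _ => sq_nonneg (enorm2 (x.1 j))) (Finset.mem_univ i)
  rw [cost_eq]
  nlinarith [sq_nonneg ‖x.2.1‖]

theorem mul_norm_sq_le_cost (hγ : 0 ≤ γ) (x : Hn n) : (ε / 2) * ‖x.2.1‖ ^ 2 ≤ cost tb ε γ x := by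
  have htrack : 0 ≤ ∑ i, ∫ s, (U (x.2.2 i) s - tb i s) ^ 2 ∂mu01 :=
    Finset.sum_nonneg fun i _ => integral_nonneg fun s => sq_nonneg _
  have hfield : 0 ≤ ∑ i, enorm2 (x.1 i) ^ 2 := Finset.sum_nonneg fun i _ => sq_nonneg _
  rw [cost_eq]
  nlinarith

theorem cost_nonneg (hε : 0 ≤ ε) (hγ : 0 ≤ γ) (x : Hn n) : 0 ≤ cost tb ε γ x :=
  (by positivity : 0 ≤ (ε / 2) * ‖x.2.1‖ ^ 2).trans (mul_norm_sq_le_cost hγ x)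

theorem admissible_zero : Admissible (0 : Hn n) := fun _ => isStateSol_zero 0

theorem cost_zero : cost tb ε γ (0 : Hn n) = (1 / 2) * ∑ i, ∫ s, tb i s ^ 2 ∂mu01 := by
  simp [cost_eq, enorm2, U_zero]

end Cost

section DirectMethod

variable {n : ℕ} {tb : Fin n → ℝ → ℝ} {ε γ : ℝ}

def WeakTendstoHn (X : ℕ → Hn n) (x : Hn n) : Prop :=
  Tendsto (fun k => (X k).1) atTop (𝓝 x.1) ∧ WeakTendsto (fun k => (X k).2.1) x.2.1 ∧
    ∀ i, WeakTendsto (fun k => (X k).2.2 i) (x.2.2 i)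

theorem exists_subseq_weakTendstoHn {X : ℕ → Hn n} {R : ℝ} (hh : ∀ k, ‖(X k).1‖ ≤ R)
    (ha : ∀ k, ‖(X k).2.1‖ ≤ R) (hg : ∀ k i, ‖(X k).2.2 i‖ ≤ R) :
    ∃ x φ, StrictMono φ ∧ WeakTendstoHn (X ∘ φ) x := by
  obtain ⟨h₀, -, φ₁, hφ₁, hh₀⟩ := tendsto_subseq_of_bounded (Metric.isBounded_closedBall)
    (x := fun k => (X k).1) (fun k => mem_closedBall_zero_iff.2 (hh k))
  obtain ⟨a₀, φ₂, hφ₂, ha₀⟩ := exists_subseq_weakTendsto (u := fun k => (X (φ₁ k)).2.1)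
    (fun k => ha _)
  obtain ⟨g₀, φ₃, hφ₃, hg₀⟩ := exists_subseq_weakTendsto_pi
    (fun k => (X (φ₁ (φ₂ k))).2.2) (fun k => hg _)
  refine ⟨(h₀, a₀, g₀), φ₁ ∘ φ₂ ∘ φ₃, hφ₁.comp (hφ₂.comp hφ₃), ?_, ha₀.comp hφ₃.tendsto_atTop, hg₀⟩
  exact hh₀.comp ((hφ₂.comp hφ₃).tendsto_atTop)

theorem Admissible.of_weakTendstoHn {X : ℕ → Hn n} {x : Hn n} (hX : ∀ k, Admissible (X k))
    (h : WeakTendstoHn X x) : Admissible x := fun i =>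
  isStateSol_of_tendsto (tendsto_pi_nhds.1 h.1 i) h.2.1 (h.2.2 i) (fun k => hX k i)

theorem cost_le_of_weakTendstoHn (htb : ∀ i, MemLp (tb i) 2 mu01) (hε : 0 ≤ ε)
    {X : ℕ → Hn n} {x : Hn n} (h : WeakTendstoHn X x) {C : ℝ} (hC : ∀ k i, ‖(X k).2.2 i‖ ≤ C)
    {c : ℝ} (hc : Tendsto (fun k => cost tb ε γ (X k)) atTop (𝓝 c)) : cost tb ε γ x ≤ c := by
  obtain ⟨hh, ha, hg⟩ := h
  have htrack : Tendsto (fun k => (1 / 2) * ∑ i, ∫ s, (U ((X k).2.2 i) s - tb i s) ^ 2 ∂mu01)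
      atTop (𝓝 ((1 / 2) * ∑ i, ∫ s, (U (x.2.2 i) s - tb i s) ^ 2 ∂mu01)) :=
    (tendsto_finsetSum _ fun i _ =>
      tendsto_integral_U_sub_sq (hg i) (fun k => hC k i) (htb i)).const_mul _
  have hfield : Tendsto (fun k => (γ / 2) * ∑ i, enorm2 ((X k).1 i) ^ 2) atTop
      (𝓝 ((γ / 2) * ∑ i, enorm2 (x.1 i) ^ 2)) :=
    (tendsto_finsetSum _ fun i _ =>
      ((continuous_enorm2.tendsto _).comp (tendsto_pi_nhds.1 hh i)).pow 2).const_mul _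
  have hdesign := ha.mul_norm_sq_le (t := ε / 2) (by positivity) <|
    ((hc.sub htrack).sub hfield).congr fun k => by rw [cost_eq]; ring
  rw [cost_eq]
  linarith

theorem exists_bound_of_cost_le (hε : 0 < ε) (hγ : 0 < γ) (K : ℝ) : ∃ R, ∀ x : Hn n,
    Admissible x → cost tb ε γ x ≤ K → ‖x.1‖ ≤ R ∧ ‖x.2.1‖ ≤ R ∧ ∀ i, ‖x.2.2 i‖ ≤ R := by
  refine ⟨√(2 * K / γ) + √(2 * K / ε), fun x hx hK => ?_⟩
  have hfield : ∀ i, enorm2 (x.1 i) ≤ √(2 * K / γ) := fun i => by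
    refine Real.le_sqrt_of_sq_le ?_
    rw [le_div_iff₀ hγ]
    linarith [mul_sq_enorm2_le_cost (tb := tb) hε.le hγ.le x i]
  have hdesign : ‖x.2.1‖ ≤ √(2 * K / ε) := by
    refine Real.le_sqrt_of_sq_le ?_
    rw [le_div_iff₀ hε]
    linarith [mul_norm_sq_le_cost (tb := tb) (ε := ε) hγ.le x]
  have hγR : √(2 * K / γ) ≤ √(2 * K / γ) + √(2 * K / ε) := le_add_of_nonneg_right (by positivity)
  refine ⟨(pi_norm_le_iff_of_nonneg (by positivity)).2 fun i => ?_, ?_, fun i => ?_⟩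
  · exact (norm_le_enorm2 _).trans ((hfield i).trans hγR)
  · exact hdesign.trans (le_add_of_nonneg_left (by positivity))
  · exact (hx i).norm_le.trans ((hfield i).trans hγR)

theorem sq_enorm2_le_of_forall_cost_le (hε : 0 ≤ ε) (hγ : 0 < γ) {x : Hn n}
    (hmin : ∀ y : Hn n, Admissible y → cost tb ε γ x ≤ cost tb ε γ y) (i : Fin n) :
    enorm2 (x.1 i) ^ 2 ≤ (∑ j, ∫ s, tb j s ^ 2 ∂mu01) / γ := by
  have h0 := cost_zero (tb := tb) (ε := ε) (γ := γ) ▸ hmin 0 admissible_zero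
  rw [le_div_iff₀ hγ]
  linarith [mul_sq_enorm2_le_cost (tb := tb) hε hγ.le x i]

end DirectMethod

/-- Theorem `min` (i): for all `ε, γ > 0` and targets in `L²(I)ⁿ`, the
cost `C_{ε,γ}` has a minimizer in `𝓐`, and every minimizer satisfies
`(max_i |h_i|)² ≤ Θ̄²/γ` where `Θ̄² = Σᵢ ∫₀¹ ϑ̄ᵢ²`. -/
theorem cost_has_minimizer (n : ℕ) (ε γ : ℝ) (hε : 0 < ε) (hγ : 0 < γ)
    (tb : Fin n → ℝ → ℝ) (htb : ∀ i, MemLp (tb i) 2 mu01) :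
    (∃ x : Hn n, Admissible x ∧ ∀ y : Hn n, Admissible y →
        cost tb ε γ x ≤ cost tb ε γ y) ∧
    (∀ x : Hn n, Admissible x → (∀ y : Hn n, Admissible y →
        cost tb ε γ x ≤ cost tb ε γ y) →
      ∀ i, (enorm2 (x.1 i)) ^ 2 ≤ (∑ j, ∫ s, (tb j s) ^ 2 ∂mu01) / γ) := by
  refine ⟨?_, fun x _ hmin => sq_enorm2_le_of_forall_cost_le hε.le hγ hmin⟩
  set S := cost tb ε γ '' {x | Admissible x}
  have hS : S.Nonempty := ⟨_, 0, admissible_zero, rfl⟩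
  have hSbdd : BddBelow S := ⟨0, by rintro _ ⟨x, -, rfl⟩; exact cost_nonneg hε.le hγ.le x⟩
  obtain ⟨u, hu_anti, hu_lim, hu_mem⟩ := exists_seq_tendsto_sInf hS hSbdd
  choose X hX hXu using hu_mem
  obtain ⟨R, hR⟩ := exists_bound_of_cost_le (tb := tb) hε hγ (u 0)
  have hXR := fun k => hR (X k) (hX k) ((hXu k).trans_le (hu_anti (Nat.zero_le k)))
  obtain ⟨x, φ, hφ, hXx⟩ := exists_subseq_weakTendstoHn (fun k => (hXR k).1)
    (fun k => (hXR k).2.1) (fun k => (hXR k).2.2)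
  have hcost : Tendsto (fun k => cost tb ε γ (X (φ k))) atTop (𝓝 (sInf S)) :=
    (hu_lim.comp hφ.tendsto_atTop).congr fun k => (hXu _).symm
  refine ⟨x, Admissible.of_weakTendstoHn (fun k => hX (φ k)) hXx, fun y hy => ?_⟩
  calc cost tb ε γ x ≤ sInf S :=
        cost_le_of_weakTendstoHn htb hε.le hXx (fun k => (hXR (φ k)).2.2) hcost
    _ ≤ cost tb ε γ y := csInf_le hSbdd ⟨y, hy, rfl⟩
end

section
/- Let n = 1 and let ϑ̄ ∈ H³(I) satisfy ϑ̄(0)=0 and ϑ̄'(1)=0. Then ϑ̄ is attainable: there exist h̄ ∈ ℝ² and ᾱ ∈ H^1_{0L}(I) such that ϑ̄ solves −ϑ̄'' − h̄·Dm(ᾱ+ϑ̄) = 0 in I together with ϑ̄(0)=0 and ϑ̄'(1)=0. Explicitly, for any H > max_{s∈[0,1]}|ϑ̄''(s)| one may take h̄ = (H cos ψ, H sin ψ) with ψ = −arcsin(ϑ̄''(0)/H) and ᾱ(s) = arcsin(ϑ̄''(s)/H) − ϑ̄(s) + ψ. -/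
open MeasureTheory Set

/-!
With `β = arcsin (ϑ̄''/H)` the state equation reduces to `H sin β = ϑ̄''`, so the only real work
is to show that `ᾱ ∈ H¹`. Since `H > K := max |ϑ̄''|`, the map `y ↦ arcsin (y / H)` is `C¹`,
hence Lipschitz, on `[-K, K]`; composed with the absolutely continuous `ϑ̄''` it is absolutely
continuous, and the chain rule holds almost everywhere, giving the `L²` weak derivative
`ϑ̄''' / √(H² - ϑ̄''²) - ϑ̄'`.
-/

open Filter
open scoped NNReal

theorem AbsolutelyContinuousOnInterval.congr {X : Type*} [PseudoMetricSpace X] {f g : ℝ → X}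
    {a b : ℝ} (hf : AbsolutelyContinuousOnInterval f a b) (hfg : EqOn f g (uIcc a b)) :
    AbsolutelyContinuousOnInterval g a b := by
  refine Tendsto.congr' ?_ hf
  filter_upwards [mem_inf_of_right (mem_principal_self _)] with E hE
  exact Finset.sum_congr rfl fun i hi => by rw [hfg (hE.1 i hi).1, hfg (hE.1 i hi).2]

theorem LipschitzOnWith.comp_absolutelyContinuousOnInterval {X Y : Type*} [PseudoMetricSpace X]
    [PseudoMetricSpace Y] {f : X → Y} {g : ℝ → X} {K : ℝ≥0} {s : Set X} {a b : ℝ}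
    (hf : LipschitzOnWith K f s) (hg : AbsolutelyContinuousOnInterval g a b)
    (hgs : MapsTo g (uIcc a b) s) : AbsolutelyContinuousOnInterval (f ∘ g) a b := by
  refine squeeze_zero' (Eventually.of_forall fun E => Finset.sum_nonneg fun _ _ => dist_nonneg)
    ?_ (by simpa using Tendsto.const_mul (K : ℝ) hg)
  filter_upwards [mem_inf_of_right (mem_principal_self _)] with E hE
  rw [Finset.mul_sum]
  gcongr with i hi
  exact hf.dist_le_mul _ (hgs (hE.1 i hi).1) _ (hgs (hE.1 i hi).2)

theorem absolutelyContinuousOnInterval_of_eq_add_integral {v w : ℝ → ℝ} {a b : ℝ}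
    (hw : IntervalIntegrable w volume a b) (hv : ∀ t ∈ uIcc a b, v t = v a + ∫ s in a..t, w s) :
    AbsolutelyContinuousOnInterval v a b :=
  (((LipschitzWith.const (v a)).lipschitzOnWith.absolutelyContinuousOnInterval).fun_add
    (hw.absolutelyContinuousOnInterval_intervalIntegral left_mem_uIcc)).congr
    fun t ht => (hv t ht).symm

theorem integral_comp_mul_eq_sub_of_eq_add_integral {F F' v w : ℝ → ℝ} {s : Set ℝ} {K : ℝ≥0}
    {a b : ℝ} (hF : ∀ x ∈ s, HasDerivAt F (F' x) x) (hFK : LipschitzOnWith K F s)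
    (hw : IntervalIntegrable w volume a b) (hv : ∀ t ∈ uIcc a b, v t = v a + ∫ x in a..t, w x)
    (hvs : MapsTo v (uIcc a b) s) :
    ∫ t in a..b, F' (v t) * w t = F (v b) - F (v a) := by
  have hFv := hFK.comp_absolutelyContinuousOnInterval
    (absolutelyContinuousOnInterval_of_eq_add_integral hw hv) hvs
  refine (intervalIntegral.integral_congr_ae ?_).trans hFv.integral_deriv_eq_sub
  have hne : ∀ c : ℝ, ∀ᵐ x, x ≠ c := fun c => by simp [ae_iff, measure_singleton]
  filter_upwards [hw.ae_hasDerivAt_integral, hne a, hne b] with x hw' hxa hxb hx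
  have hxI : x ∈ Ioo (min a b) (max a b) :=
    ⟨hx.1, hx.2.lt_of_ne fun h => (max_choice a b).elim (fun h' => hxa (h.trans h'))
      fun h' => hxb (h.trans h')⟩
  have hvx : HasDerivAt v (w x) x := by
    refine ((hw' (Ioo_subset_Icc_self hxI) a left_mem_uIcc).const_add
      (v a)).congr_of_eventuallyEq ?_
    filter_upwards [Ioo_mem_nhds hxI.1 hxI.2] with y hy using hv y (Ioo_subset_Icc_self hy)
  exact ((hF _ (hvs (Ioo_subset_Icc_self hxI))).comp x hvx).deriv.symm

theorem IntervalIntegrable.sq_sub {f g : ℝ → ℝ} {a b : ℝ} (hf : IntervalIntegrable f volume a b)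
    (hg : IntervalIntegrable g volume a b) (hf2 : IntervalIntegrable (fun x => f x ^ 2) volume a b)
    (hg2 : IntervalIntegrable (fun x => g x ^ 2) volume a b) :
    IntervalIntegrable (fun x => (f x - g x) ^ 2) volume a b := by
  refine ((hf2.const_mul 2).add (hg2.const_mul 2)).mono_fun
    (((hf.sub hg).def'.aestronglyMeasurable).pow 2) (Eventually.of_forall fun x => ?_)
  simp only [Real.norm_eq_abs]
  rw [abs_of_nonneg (sq_nonneg _), abs_of_nonneg (by positivity)]
  nlinarith [sq_nonneg (f x + g x)]

theorem edot_Dmvec_add (H ψ β : ℝ) :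
    edot (H * Real.cos ψ, H * Real.sin ψ) (Dmvec (β + ψ)) = -(H * Real.sin β) := by
  simp only [edot, Dmvec, Real.sin_add, Real.cos_add]
  linear_combination -(H * Real.sin β) * Real.sin_sq_add_cos_sq ψ

theorem abs_div_lt_one_of_abs_lt {x H : ℝ} (hx : |x| < H) : |x / H| < 1 := by
  have hH : 0 < H := (abs_nonneg x).trans_lt hx
  rwa [abs_div, abs_of_pos hH, div_lt_one hH]

theorem hasDerivAt_arcsin_div {x H : ℝ} (hx : |x| < H) :
    HasDerivAt (fun y => Real.arcsin (y / H)) (√(H ^ 2 - x ^ 2))⁻¹ x := by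
  have hH : 0 < H := (abs_nonneg x).trans_lt hx
  obtain ⟨h₁, h₂⟩ := abs_lt.1 (abs_div_lt_one_of_abs_lt hx)
  refine ((Real.hasDerivAt_arcsin h₁.ne' h₂.ne).comp x
    ((hasDerivAt_id x).div_const H)).congr_deriv ?_
  have hx2 : 0 ≤ H ^ 2 - x ^ 2 := by nlinarith [sq_abs x, abs_nonneg x]
  rw [show 1 - (x / H) ^ 2 = (H ^ 2 - x ^ 2) / H ^ 2 by field_simp, Real.sqrt_div hx2,
    Real.sqrt_sq hH.le]
  field_simp

theorem exists_lipschitzOnWith_arcsin_div {H K : ℝ} (hKH : K < H) :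
    ∃ L, LipschitzOnWith L (fun y => Real.arcsin (y / H)) (Icc (-K) K) := by
  refine ContDiffOn.exists_lipschitzOnWith (n := 1) (fun x hx => ?_) one_ne_zero (convex_Icc _ _)
    isCompact_Icc
  obtain ⟨h₁, h₂⟩ := abs_lt.1 (abs_div_lt_one_of_abs_lt ((abs_le.2 hx).trans_lt hKH))
  exact ((Real.contDiffAt_arcsin h₁.ne' h₂.ne).comp x (contDiffAt_id.div_const H)).contDiffWithinAt

theorem integral_inv_sqrt_mul_eq_arcsin_sub {v w : ℝ → ℝ} {H K a b : ℝ} (hKH : K < H)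
    (hw : IntervalIntegrable w volume a b) (hv : ∀ t ∈ uIcc a b, v t = v a + ∫ x in a..t, w x)
    (hvK : ∀ t ∈ uIcc a b, |v t| ≤ K) :
    ∫ t in a..b, (√(H ^ 2 - v t ^ 2))⁻¹ * w t = Real.arcsin (v b / H) - Real.arcsin (v a / H) := by
  obtain ⟨L, hL⟩ := exists_lipschitzOnWith_arcsin_div hKH
  exact integral_comp_mul_eq_sub_of_eq_add_integral
    (fun x hx => hasDerivAt_arcsin_div ((abs_le.2 hx).trans_lt hKH)) hL hw hv
    fun t ht => abs_le.1 (hvK t ht)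

theorem continuousOn_inv_sqrt_sq_sub_sq {H K : ℝ} (hKH : K < H) :
    ContinuousOn (fun y : ℝ => (√(H ^ 2 - y ^ 2))⁻¹) (Icc (-K) K) := by
  refine ContinuousOn.inv₀ (by fun_prop) fun y hy => ?_
  have hy' := (abs_le.2 hy).trans_lt hKH
  exact (Real.sqrt_pos.2 (by nlinarith [sq_abs y, abs_nonneg y])).ne'

theorem target_attainable_general
    (θb θb' θb'' θb''' : ℝ → ℝ)
    -- `ϑ̄ ∈ H³(I)`, recorded through its three successive weak derivatives:
    (hi1 : IntervalIntegrable θb' volume 0 1)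
    (hi3 : IntervalIntegrable θb''' volume 0 1)
    (hsq1 : IntervalIntegrable (fun s => (θb' s) ^ 2) volume 0 1)
    (hsq3 : IntervalIntegrable (fun s => (θb''' s) ^ 2) volume 0 1)
    (hr1 : ∀ t ∈ Icc (0 : ℝ) 1, θb t = θb 0 + ∫ s in (0 : ℝ)..t, θb' s)
    (hr3 : ∀ t ∈ Icc (0 : ℝ) 1, θb'' t = θb'' 0 + ∫ s in (0 : ℝ)..t, θb''' s)
    -- the boundary conditions:
    (hbc0 : θb 0 = 0) :
    -- an admissible intensity `H` exists:
    (∃ H : ℝ, 0 < H ∧ ∀ s ∈ Icc (0 : ℝ) 1, |θb'' s| < H) ∧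
    -- and for any such `H` the explicit design and control attain the target:
    (∀ H : ℝ, 0 < H → (∀ s ∈ Icc (0 : ℝ) 1, |θb'' s| < H) →
      ∀ ψ : ℝ, ψ = -Real.arcsin (θb'' 0 / H) →
      ∀ αb : ℝ → ℝ, (∀ s, αb s = Real.arcsin (θb'' s / H) - θb s + ψ) →
        -- `ᾱ(0) = 0` and `ᾱ ∈ H^1_{0L}(I)`:
        αb 0 = 0 ∧
        (∃ αb' : ℝ → ℝ, IntervalIntegrable αb' volume 0 1 ∧
          IntervalIntegrable (fun s => (αb' s) ^ 2) volume 0 1 ∧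
          ∀ t ∈ Icc (0 : ℝ) 1, αb t = ∫ s in (0 : ℝ)..t, αb' s) ∧
        -- the state equation holds with `h̄ = (H cos ψ, H sin ψ)`:
        ∀ s ∈ Icc (0 : ℝ) 1,
          -θb'' s - edot (H * Real.cos ψ, H * Real.sin ψ) (Dmvec (αb s + θb s)) = 0) := by
  have hI : uIcc (0 : ℝ) 1 = Icc 0 1 := uIcc_of_le zero_le_one
  have hsub : ∀ t ∈ Icc (0 : ℝ) 1, uIcc 0 t ⊆ Icc 0 1 := fun t ht =>
    uIcc_of_le ht.1 ▸ Icc_subset_Icc le_rfl ht.2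
  have hc2 : ContinuousOn θb'' (Icc 0 1) := hI ▸
    (absolutelyContinuousOnInterval_of_eq_add_integral hi3 (hI ▸ hr3)).continuousOn
  obtain ⟨s₀, hs₀, hmax⟩ := isCompact_Icc.exists_isMaxOn (nonempty_Icc.2 zero_le_one) hc2.abs
  set K := |θb'' s₀|
  refine ⟨⟨K + 1, by positivity, fun s hs => (hmax hs).trans_lt (lt_add_one K)⟩, ?_⟩
  rintro H - hθH ψ rfl αb hα
  have hKH : K < H := hθH s₀ hs₀
  set g : ℝ → ℝ := fun s => (√(H ^ 2 - θb'' s ^ 2))⁻¹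
  have hg : ContinuousOn g (uIcc 0 1) :=
    hI ▸ (continuousOn_inv_sqrt_sq_sub_sq hKH).comp hc2 fun s hs => abs_le.1 (hmax hs)
  have hgw : IntervalIntegrable (fun s => g s * θb''' s) volume 0 1 := hi3.continuousOn_mul hg
  have hgw2 : IntervalIntegrable (fun s => (g s * θb''' s) ^ 2) volume 0 1 := by
    simpa only [mul_pow, Pi.pow_apply] using hsq3.continuousOn_mul (hg.pow 2)
  refine ⟨by rw [hα, hbc0]; ring, ⟨fun s => g s * θb''' s - θb' s, hgw.sub hi1,
    hgw.sq_sub hi1 hgw2 hsq1, fun t ht => ?_⟩, fun s hs => ?_⟩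
  · have ht' : uIcc 0 t ⊆ uIcc 0 1 := hI ▸ hsub t ht
    rw [intervalIntegral.integral_sub (hgw.mono_set ht') (hi1.mono_set ht'),
      integral_inv_sqrt_mul_eq_arcsin_sub hKH (hi3.mono_set ht')
        (fun x hx => hr3 x (hsub t ht hx)) (fun x hx => hmax (hsub t ht hx)),
      hα, hr1 t ht, hbc0]
    ring
  · obtain ⟨h₁, h₂⟩ := abs_le.1 (abs_div_lt_one_of_abs_lt (hθH s hs)).le
    have harg : αb s + θb s = Real.arcsin (θb'' s / H) + -Real.arcsin (θb'' 0 / H) := by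
      rw [hα]; ring
    rw [harg, edot_Dmvec_add, Real.sin_arcsin h₁ h₂,
      mul_div_cancel₀ _ ((abs_nonneg _).trans_lt (hθH s hs)).ne']
    ring

/-- Theorem `min` (iii): for `n = 1`, any target `ϑ̄ ∈ H³(I)` with
`ϑ̄(0) = 0`, `ϑ̄'(1) = 0` is attainable.  Explicitly: an intensity `H > max_{[0,1]}|ϑ̄''|`
exists, and for any such `H`, taking `ψ = −arcsin(ϑ̄''(0)/H)`, `h̄ = (H cos ψ, H sin ψ)`
and `ᾱ(s) = arcsin(ϑ̄''(s)/H) − ϑ̄(s) + ψ`, one has `ᾱ(0) = 0`, `ᾱ ∈ H^1_{0L}(I)`, and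
`−ϑ̄'' − h̄·Dm(ᾱ+ϑ̄) = 0` on `[0,1]`. -/
theorem target_attainable
    (θb θb' θb'' θb''' : ℝ → ℝ)
    -- `ϑ̄ ∈ H³(I)`, recorded through its three successive weak derivatives:
    (hi1 : IntervalIntegrable θb' volume 0 1)
    (hi2 : IntervalIntegrable θb'' volume 0 1)
    (hi3 : IntervalIntegrable θb''' volume 0 1)
    (hsq1 : IntervalIntegrable (fun s => (θb' s) ^ 2) volume 0 1)
    (hsq2 : IntervalIntegrable (fun s => (θb'' s) ^ 2) volume 0 1)
    (hsq3 : IntervalIntegrable (fun s => (θb''' s) ^ 2) volume 0 1)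
    (hr1 : ∀ t ∈ Icc (0 : ℝ) 1, θb t = θb 0 + ∫ s in (0 : ℝ)..t, θb' s)
    (hr2 : ∀ t ∈ Icc (0 : ℝ) 1, θb' t = θb' 0 + ∫ s in (0 : ℝ)..t, θb'' s)
    (hr3 : ∀ t ∈ Icc (0 : ℝ) 1, θb'' t = θb'' 0 + ∫ s in (0 : ℝ)..t, θb''' s)
    -- the boundary conditions:
    (hbc0 : θb 0 = 0) (hbc1 : θb' 1 = 0) :
    -- an admissible intensity `H` exists:
    (∃ H : ℝ, 0 < H ∧ ∀ s ∈ Icc (0 : ℝ) 1, |θb'' s| < H) ∧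
    -- and for any such `H` the explicit design and control attain the target:
    (∀ H : ℝ, 0 < H → (∀ s ∈ Icc (0 : ℝ) 1, |θb'' s| < H) →
      ∀ ψ : ℝ, ψ = -Real.arcsin (θb'' 0 / H) →
      ∀ αb : ℝ → ℝ, (∀ s, αb s = Real.arcsin (θb'' s / H) - θb s + ψ) →
        -- `ᾱ(0) = 0` and `ᾱ ∈ H^1_{0L}(I)`:
        αb 0 = 0 ∧
        (∃ αb' : ℝ → ℝ, IntervalIntegrable αb' volume 0 1 ∧
          IntervalIntegrable (fun s => (αb' s) ^ 2) volume 0 1 ∧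
          ∀ t ∈ Icc (0 : ℝ) 1, αb t = ∫ s in (0 : ℝ)..t, αb' s) ∧
        -- the state equation holds with `h̄ = (H cos ψ, H sin ψ)`:
        ∀ s ∈ Icc (0 : ℝ) 1,
          -θb'' s - edot (H * Real.cos ψ, H * Real.sin ψ) (Dmvec (αb s + θb s)) = 0) :=
  target_attainable_general θb θb' θb'' θb''' hi1 hi3 hsq1 hsq3 hr1 hr3 hbc0
end
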